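/- Feasibility of the T-SDP relaxation (Theorem 4): let f ∈ MvPolynomial (Fin n) ℝ have zero constant term (coeff f 0 = 0) and total degree ≤ 2N, let g_1, …, g_r ∈ MvPolynomial (Fin n) ℝ, and let v_0 : Fin l_0 × Fin m_0 → MvPolynomial (Fin n) ℝ and v_i : Fin l_i × Fin m_i → MvPolynomial (Fin n) ℝ be families of polynomials. Suppose families of symmetric real tensors 𝒜_α ∈ ℝ^{m_0×m_0×l_0} and 𝒟_{i,α} ∈ ℝ^{m_i×m_i×l_i}, indexed by multidegrees α : Fin n →₀ ℕ and supported on {α : |α| ≤ 2N}, satisfy entrywise polynomial identities (fold(v_0) * fold(v_0)ᵀ)⁽ᵏ⁾_{a,b} = Σ_α ((𝒜_α)⁽ᵏ⁾)_{a,b} · Xᵅ and g_i · (fold(v_i) * fold(v_i)ᵀ)⁽ᵏ⁾_{a,b} = Σ_α ((𝒟_{i,α})⁽ᵏ⁾)_{a,b} · Xᵅ (the t-product taken over the commutative ring MvPolynomial (Fin n) ℝ), and suppose 𝒜_0 and each 𝒟_{i,0} are the tensors whose only nonzero entry is the (slice 0, row 0, column 0) entry, equal to 1. Then the following are equivalent: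 (i) there exist symmetric tensors Z_0, Z_1, …, Z_r with bcirc(Z_0) and each bcirc(Z_i) positive semidefinite such that ⟨Z_0, 𝒜_α⟩ + Σ_{i=1}^{r} ⟨Z_i, 𝒟_{i,α}⟩ = coeff f α for every α with 0 < |α| ≤ 2N; (ii) there exist γ ∈ ℝ and symmetric tensors Z_0, Z_1, …, Z_r with bcirc(Z_0) and each bcirc(Z_i) positive semidefinite such that, as polynomials, f − γ = ⟨Z_0, fold(v_0) * fold(v_0)ᵀ⟩ + Σ_{i=1}^{r} g_i · ⟨Z_i, fold(v_i) * fold(v_i)ᵀ⟩. -/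

import Mathlib

/-!
Compare coefficients. By the coefficient identities, the coefficient of `Xᵅ` in the right-hand
side of (ii) is `⟨Z₀, 𝒜_α⟩ + Σᵢ ⟨Zᵢ, 𝒟_{i,α}⟩`, which vanishes for `|α| > 2N`, as does `coeff f α`.
Hence (ii) holds for some `γ` exactly when these coefficients agree with those of `f` for
`0 < |α| ≤ 2N`: the constant coefficient is absorbed by `γ`.
-/

open Matrix

/-- The block circulant matrix of a third-order tensor over a commutative semiring. -/
def bcirc {R : Type*} [CommSemiring R] {m n l : ℕ} (A : Fin l → Matrix (Fin m) (Fin n) R) :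
    Matrix (Fin l × Fin m) (Fin l × Fin n) R :=
  Matrix.of fun p q => A (p.1 - q.1) p.2 q.2

/-- `unfold` of a third-order tensor: the slices stacked vertically. -/
def unfoldT {R : Type*} [CommSemiring R] {m n l : ℕ} (A : Fin l → Matrix (Fin m) (Fin n) R) :
    Matrix (Fin l × Fin m) (Fin n) R :=
  Matrix.of fun ki j => A ki.1 ki.2 j

/-- `fold`, the inverse of `unfold`. -/
def foldT {R : Type*} [CommSemiring R] {m n l : ℕ} (M : Matrix (Fin l × Fin m) (Fin n) R) :
    Fin l → Matrix (Fin m) (Fin n) R :=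
  fun k => Matrix.of fun i j => M (k, i) j

/-- The t-product of third-order tensors: `A * B = fold(bcirc(A) · unfold(B))`. -/
def tMul {R : Type*} [CommSemiring R] {m n p l : ℕ} (A : Fin l → Matrix (Fin m) (Fin n) R)
    (B : Fin l → Matrix (Fin n) (Fin p) R) : Fin l → Matrix (Fin m) (Fin p) R :=
  foldT (bcirc A * unfoldT B)

/-- The transpose of a third-order tensor: `(Aᵀ)⁽ᵏ⁾ = (A⁽⁻ᵏ⁾)ᵀ`. -/
def tTranspose {R : Type*} [CommSemiring R] {m n l : ℕ} (A : Fin l → Matrix (Fin m) (Fin n) R) :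
    Fin l → Matrix (Fin n) (Fin m) R :=
  fun k => (A (-k))ᵀ

/-- `fold` of a vector `v ∈ R^{ml}` regarded as an `ml × 1` matrix. -/
def foldVec {R : Type*} [CommSemiring R] {m l : ℕ} (v : Fin l × Fin m → R) :
    Fin l → Matrix (Fin m) (Fin 1) R :=
  fun k => Matrix.of fun i _ => v (k, i)

/-- The entrywise inner product of two real third-order tensors. -/
def tdot {m n l : ℕ} (A B : Fin l → Matrix (Fin m) (Fin n) ℝ) : ℝ :=
  ∑ k : Fin l, ∑ i : Fin m, ∑ j : Fin n, A k i j * B k i j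

/-- The inner product `⟨Z, P⟩` of a real tensor `Z` with a tensor `P` of the same format
whose entries are polynomials. -/
noncomputable def tdotPoly {n m l : ℕ} (Z : Fin l → Matrix (Fin m) (Fin m) ℝ)
    (P : Fin l → Matrix (Fin m) (Fin m) (MvPolynomial (Fin n) ℝ)) : MvPolynomial (Fin n) ℝ :=
  ∑ k : Fin l, ∑ a : Fin m, ∑ b : Fin m, MvPolynomial.C (Z k a b) * P k a b

open Finsupp

namespace MvPolynomial

variable {σ R : Type*} [CommRing R]

theorem exists_sub_C_eq_iff_coeff_eq {f p : MvPolynomial σ R} {D : ℕ} (hf : f.totalDegree ≤ D)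
    (hp : ∀ α : σ →₀ ℕ, D < α.degree → coeff α p = 0) :
    (∃ γ : R, f - C γ = p) ↔
      ∀ α : σ →₀ ℕ, 0 < α.degree → α.degree ≤ D → coeff α p = coeff α f := by
  classical
  constructor
  · rintro ⟨γ, rfl⟩ α hpos _
    have hα : α ≠ 0 := (degree_eq_zero_iff α).not.mp hpos.ne'
    rw [coeff_sub, coeff_C, if_neg (Ne.symm hα), sub_zero]
  · refine fun h => ⟨coeff 0 f - coeff 0 p, MvPolynomial.ext _ _ fun α => ?_⟩
    rcases eq_or_ne α 0 with rfl | hα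
    · simp
    rw [coeff_sub, coeff_C, if_neg (Ne.symm hα), sub_zero]
    rcases le_or_gt α.degree D with hD | hD
    · exact (h α (pos_of_ne_zero ((degree_eq_zero_iff α).not.mpr hα)) hD).symm
    · rw [hp α hD, coeff_eq_zero_of_totalDegree_lt (hf.trans_lt hD)]

end MvPolynomial

open MvPolynomial

theorem coeff_tdotPoly {n m l : ℕ} (Z : Fin l → Matrix (Fin m) (Fin m) ℝ)
    (P : Fin l → Matrix (Fin m) (Fin m) (MvPolynomial (Fin n) ℝ)) (α : Fin n →₀ ℕ) :
    coeff α (tdotPoly Z P) = ∑ k, ∑ a, ∑ b, Z k a b * coeff α (P k a b) := by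
  simp only [tdotPoly, coeff_sum, coeff_C_mul]

theorem mul_tdotPoly {n m l : ℕ} (p : MvPolynomial (Fin n) ℝ)
    (Z : Fin l → Matrix (Fin m) (Fin m) ℝ)
    (P : Fin l → Matrix (Fin m) (Fin m) (MvPolynomial (Fin n) ℝ)) :
    p * tdotPoly Z P = tdotPoly Z fun k => p • P k := by
  simp only [tdotPoly, Finset.mul_sum, Matrix.smul_apply, smul_eq_mul, mul_left_comm]

theorem tsdp_relaxation_feasibility_general
    (n N r : ℕ) (f : MvPolynomial (Fin n) ℝ) (g : Fin r → MvPolynomial (Fin n) ℝ)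
    (l0 m0 : ℕ) (li mi : Fin r → ℕ)
    (v0 : Fin l0 × Fin m0 → MvPolynomial (Fin n) ℝ)
    (v : ∀ i : Fin r, Fin (li i) × Fin (mi i) → MvPolynomial (Fin n) ℝ)
    (𝒜 : (Fin n →₀ ℕ) → Fin l0 → Matrix (Fin m0) (Fin m0) ℝ)
    (𝒟 : ∀ i : Fin r, (Fin n →₀ ℕ) → Fin (li i) → Matrix (Fin (mi i)) (Fin (mi i)) ℝ)
    (hfdeg : f.totalDegree ≤ 2 * N)
    (h𝒜supp : ∀ α : Fin n →₀ ℕ, 2 * N < ∑ j : Fin n, α j → 𝒜 α = 0)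
    (h𝒟supp : ∀ (i : Fin r) (α : Fin n →₀ ℕ), 2 * N < ∑ j : Fin n, α j → 𝒟 i α = 0)
    (h𝒜coeff : ∀ (α : Fin n →₀ ℕ) (k : Fin l0) (a b : Fin m0),
        MvPolynomial.coeff α ((tMul (foldVec v0) (tTranspose (foldVec v0))) k a b) =
          𝒜 α k a b)
    (h𝒟coeff : ∀ (i : Fin r) (α : Fin n →₀ ℕ) (k : Fin (li i)) (a b : Fin (mi i)),
        MvPolynomial.coeff α
            (g i * (tMul (foldVec (v i)) (tTranspose (foldVec (v i)))) k a b) =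
          𝒟 i α k a b) :
    (∃ (Z0 : Fin l0 → Matrix (Fin m0) (Fin m0) ℝ)
        (Z : ∀ i : Fin r, Fin (li i) → Matrix (Fin (mi i)) (Fin (mi i)) ℝ),
        (∀ k : Fin l0, (Z0 k)ᵀ = Z0 (-k)) ∧
        (∀ (i : Fin r) (k : Fin (li i)), (Z i k)ᵀ = Z i (-k)) ∧
        (bcirc Z0).PosSemidef ∧
        (∀ i : Fin r, (bcirc (Z i)).PosSemidef) ∧
        ∀ α : Fin n →₀ ℕ, 0 < ∑ j : Fin n, α j → (∑ j : Fin n, α j) ≤ 2 * N →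
          tdot Z0 (𝒜 α) + ∑ i : Fin r, tdot (Z i) (𝒟 i α) = MvPolynomial.coeff α f) ↔
    (∃ (γ : ℝ) (Z0 : Fin l0 → Matrix (Fin m0) (Fin m0) ℝ)
        (Z : ∀ i : Fin r, Fin (li i) → Matrix (Fin (mi i)) (Fin (mi i)) ℝ),
        (∀ k : Fin l0, (Z0 k)ᵀ = Z0 (-k)) ∧
        (∀ (i : Fin r) (k : Fin (li i)), (Z i k)ᵀ = Z i (-k)) ∧
        (bcirc Z0).PosSemidef ∧
        (∀ i : Fin r, (bcirc (Z i)).PosSemidef) ∧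
        f - MvPolynomial.C γ =
          tdotPoly Z0 (tMul (foldVec v0) (tTranspose (foldVec v0))) +
            ∑ i : Fin r,
              g i * tdotPoly (Z i) (tMul (foldVec (v i)) (tTranspose (foldVec (v i))))) := by
  simp only [← degree_eq_sum] at h𝒜supp h𝒟supp ⊢
  let sos (Z0 : Fin l0 → Matrix (Fin m0) (Fin m0) ℝ)
      (Z : ∀ i : Fin r, Fin (li i) → Matrix (Fin (mi i)) (Fin (mi i)) ℝ) :=
    tdotPoly Z0 (tMul (foldVec v0) (tTranspose (foldVec v0))) +
      ∑ i : Fin r, g i * tdotPoly (Z i) (tMul (foldVec (v i)) (tTranspose (foldVec (v i))))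
  have coeff_sos Z0 Z α : coeff α (sos Z0 Z) = tdot Z0 (𝒜 α) + ∑ i, tdot (Z i) (𝒟 i α) := by
    simp only [sos, coeff_add, coeff_sum, mul_tdotPoly, coeff_tdotPoly, Matrix.smul_apply,
      smul_eq_mul, h𝒜coeff, h𝒟coeff, tdot]
  have sos_iff Z0 Z := exists_sub_C_eq_iff_coeff_eq (p := sos Z0 Z) hfdeg fun α hα => by
    simp [coeff_sos, h𝒜supp α hα, h𝒟supp _ α hα, tdot]
  constructor
  · rintro ⟨Z0, Z, hZ0, hZ, hZ0psd, hZpsd, hcoeff⟩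
    obtain ⟨γ, hγ⟩ := (sos_iff Z0 Z).2 fun α h0 hD => (coeff_sos Z0 Z α).trans (hcoeff α h0 hD)
    exact ⟨γ, Z0, Z, hZ0, hZ, hZ0psd, hZpsd, hγ⟩
  · rintro ⟨γ, Z0, Z, hZ0, hZ, hZ0psd, hZpsd, hγ⟩
    refine ⟨Z0, Z, hZ0, hZ, hZ0psd, hZpsd, fun α h0 hD => ?_⟩
    rw [← coeff_sos]
    exact (sos_iff Z0 Z).1 ⟨γ, hγ⟩ α h0 hD

/-- Theorem 4: feasibility of the T-SDP relaxation `(Q_N^{l_0,…,l_r})` is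
equivalent to the existence of a block circulant SOS representation of `f − γ`. -/
theorem tsdp_relaxation_feasibility
    (n N r : ℕ) (f : MvPolynomial (Fin n) ℝ) (g : Fin r → MvPolynomial (Fin n) ℝ)
    (l0 m0 : ℕ) (li mi : Fin r → ℕ)
    (v0 : Fin l0 × Fin m0 → MvPolynomial (Fin n) ℝ)
    (v : ∀ i : Fin r, Fin (li i) × Fin (mi i) → MvPolynomial (Fin n) ℝ)
    (𝒜 : (Fin n →₀ ℕ) → Fin l0 → Matrix (Fin m0) (Fin m0) ℝ)
    (𝒟 : ∀ i : Fin r, (Fin n →₀ ℕ) → Fin (li i) → Matrix (Fin (mi i)) (Fin (mi i)) ℝ)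
    (hf0 : MvPolynomial.coeff 0 f = 0)
    (hfdeg : f.totalDegree ≤ 2 * N)
    (h𝒜symm : ∀ (α : Fin n →₀ ℕ) (k : Fin l0), (𝒜 α k)ᵀ = 𝒜 α (-k))
    (h𝒟symm : ∀ (i : Fin r) (α : Fin n →₀ ℕ) (k : Fin (li i)), (𝒟 i α k)ᵀ = 𝒟 i α (-k))
    (h𝒜supp : ∀ α : Fin n →₀ ℕ, 2 * N < ∑ j : Fin n, α j → 𝒜 α = 0)
    (h𝒟supp : ∀ (i : Fin r) (α : Fin n →₀ ℕ), 2 * N < ∑ j : Fin n, α j → 𝒟 i α = 0)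
    (h𝒜coeff : ∀ (α : Fin n →₀ ℕ) (k : Fin l0) (a b : Fin m0),
        MvPolynomial.coeff α ((tMul (foldVec v0) (tTranspose (foldVec v0))) k a b) =
          𝒜 α k a b)
    (h𝒟coeff : ∀ (i : Fin r) (α : Fin n →₀ ℕ) (k : Fin (li i)) (a b : Fin (mi i)),
        MvPolynomial.coeff α
            (g i * (tMul (foldVec (v i)) (tTranspose (foldVec (v i)))) k a b) =
          𝒟 i α k a b)
    (h𝒜zero : ∀ (k : Fin l0) (a b : Fin m0),
        𝒜 0 k a b = if (k : ℕ) = 0 ∧ (a : ℕ) = 0 ∧ (b : ℕ) = 0 then 1 else 0)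
    (h𝒟zero : ∀ (i : Fin r) (k : Fin (li i)) (a b : Fin (mi i)),
        𝒟 i 0 k a b = if (k : ℕ) = 0 ∧ (a : ℕ) = 0 ∧ (b : ℕ) = 0 then 1 else 0) :
    (∃ (Z0 : Fin l0 → Matrix (Fin m0) (Fin m0) ℝ)
        (Z : ∀ i : Fin r, Fin (li i) → Matrix (Fin (mi i)) (Fin (mi i)) ℝ),
        (∀ k : Fin l0, (Z0 k)ᵀ = Z0 (-k)) ∧
        (∀ (i : Fin r) (k : Fin (li i)), (Z i k)ᵀ = Z i (-k)) ∧
        (bcirc Z0).PosSemidef ∧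
        (∀ i : Fin r, (bcirc (Z i)).PosSemidef) ∧
        ∀ α : Fin n →₀ ℕ, 0 < ∑ j : Fin n, α j → (∑ j : Fin n, α j) ≤ 2 * N →
          tdot Z0 (𝒜 α) + ∑ i : Fin r, tdot (Z i) (𝒟 i α) = MvPolynomial.coeff α f) ↔
    (∃ (γ : ℝ) (Z0 : Fin l0 → Matrix (Fin m0) (Fin m0) ℝ)
        (Z : ∀ i : Fin r, Fin (li i) → Matrix (Fin (mi i)) (Fin (mi i)) ℝ),
        (∀ k : Fin l0, (Z0 k)ᵀ = Z0 (-k)) ∧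
        (∀ (i : Fin r) (k : Fin (li i)), (Z i k)ᵀ = Z i (-k)) ∧
        (bcirc Z0).PosSemidef ∧
        (∀ i : Fin r, (bcirc (Z i)).PosSemidef) ∧
        f - MvPolynomial.C γ =
          tdotPoly Z0 (tMul (foldVec v0) (tTranspose (foldVec v0))) +
            ∑ i : Fin r,
              g i * tdotPoly (Z i) (tMul (foldVec (v i)) (tTranspose (foldVec (v i))))) :=
  tsdp_relaxation_feasibility_general n N r f g l0 m0 li mi v0 v 𝒜 𝒟 hfdeg h𝒜supp h𝒟supp h𝒜coeff
    h𝒟coeff
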